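/- Let G be a profinite group. Then the underlying profinite space of G is an injective object in the category Profinite: for every injective continuous map i : X → Y between profinite spaces and every continuous map f : X → G, there exists a continuous map g : Y → G with g ∘ i = f. -/

import Mathlib

/-!
Consider closed relations `Γ ⊆ Y × G` containing the graph of `f` along `i` whose fibres are the
left cosets of one subgroup `H`; such a `Γ` is a continuous map `Y → G ⧸ H` extending `f` modulo
`H`. Since `G` is compact, a chain of them is bounded below by its intersection, so Zorn's lemma
gives a minimal one. If a fibre of a minimal `Γ` contained two points, an open normal subgroup `N`
separating them would let us cut `Γ` down to a relation whose fibres are cosets of `H ⊓ N`: as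
`G ⧸ N` is finite, the required lift `Y → G ⧸ N` exists by the lifting property of finite sets
against injections of profinite spaces. Hence the minimal `Γ` is the graph of a function,
continuous because its graph is closed and `G` is compact.
-/

open Set Pointwise

section ClosedGraph

variable {Y G : Type*} [TopologicalSpace Y] [TopologicalSpace G] [CompactSpace G]

lemma IsClosed.isClosed_setOf_fiber_inter_nonempty {Γ : Set (Y × G)} (hΓ : IsClosed Γ)
    {C : Set G} (hC : IsClosed C) : IsClosed {y | (Prod.mk y ⁻¹' Γ ∩ C).Nonempty} := by
  have : {y | (Prod.mk y ⁻¹' Γ ∩ C).Nonempty} = Prod.fst '' (Γ ∩ univ ×ˢ C) := by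
    ext y
    simp [Set.Nonempty]
  rw [this]
  exact isClosedMap_fst_of_compactSpace _ (hΓ.inter (isClosed_univ.prod hC))

lemma continuous_of_isClosed_graph_of_compactSpace {σ : Y → G}
    (h : IsClosed {p : Y × G | p.2 = σ p.1}) : Continuous σ := by
  refine continuous_iff_isClosed.2 fun C hC => ?_
  convert h.isClosed_setOf_fiber_inter_nonempty hC using 1
  ext y
  simp [Set.Nonempty]

end ClosedGraph

section Cosets

variable {G : Type*} [Group G]

lemma smul_coe_eq_of_mem {H : Subgroup G} {u w : G} (hw : w ∈ u • (H : Set G)) :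
    u • (H : Set G) = w • (H : Set G) :=
  (leftCoset_eq_iff H).2 ((mem_leftCoset_iff u).1 hw)

lemma exists_mem_smul_inter_smul_of_inv_mul_mem_sup {H N : Subgroup G} [N.Normal] {u b : G}
    (h : u⁻¹ * b ∈ H ⊔ N) : ∃ w, w ∈ u • (H : Set G) ∧ w ∈ b • (N : Set G) := by
  obtain ⟨h, hh, n, hn, hhn⟩ := Subgroup.mem_sup_of_normal_right.1 h
  refine ⟨u * h, mem_leftCoset u hh, (mem_leftCoset_iff b).2 ?_⟩
  have : b⁻¹ * (u * h) = n⁻¹ := by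
    rw [eq_inv_mul_iff_mul_eq.2 hhn]
    group
  rw [this]
  exact N.inv_mem hn

lemma smul_inter_smul_eq_smul_inf {H N : Subgroup G} {u b w : G} (hu : w ∈ u • (H : Set G))
    (hb : w ∈ b • (N : Set G)) :
    u • (H : Set G) ∩ b • (N : Set G) = w • ((H ⊓ N : Subgroup G) : Set G) := by
  rw [smul_coe_eq_of_mem hu, smul_coe_eq_of_mem hb, Subgroup.coe_inf, smul_set_inter]

lemma exists_iInter_smul_eq_smul_iInf [TopologicalSpace G] [CompactSpace G] {ι : Type*}
    [Nonempty ι] {H : ι → Subgroup G} {u : ι → G}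
    (hclosed : ∀ j, IsClosed (u j • (H j : Set G)))
    (hdir : Directed (· ⊇ ·) fun j => u j • (H j : Set G)) :
    ∃ w : G, ⋂ j, u j • (H j : Set G) = w • ((⨅ j, H j : Subgroup G) : Set G) := by
  obtain ⟨w, hw⟩ := IsCompact.nonempty_iInter_of_directed_nonempty_isCompact_isClosed _ hdir
    (fun j => ⟨u j, mem_own_leftCoset _ _⟩) (fun j => (hclosed j).isCompact) hclosed
  refine ⟨w, ?_⟩
  rw [Subgroup.coe_iInf, smul_set_iInter]
  exact iInter_congr fun j => smul_coe_eq_of_mem (mem_iInter.1 hw j)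

end Cosets

lemma continuous_mk_of_preimage_eq_smul {Y G : Type*} [Group G] [TopologicalSpace Y]
    [TopologicalSpace G] [CompactSpace G] {Γ : Set (Y × G)} (hΓ : IsClosed Γ) {H M : Subgroup G}
    (hHM : H ≤ M) {u : Y → G} (hu : ∀ y, Prod.mk y ⁻¹' Γ = u y • (H : Set G)) :
    Continuous fun y => (u y : G ⧸ M) := by
  refine continuous_iff_isClosed.2 fun C hC => ?_
  convert hΓ.isClosed_setOf_fiber_inter_nonempty
    (hC.preimage QuotientGroup.continuous_mk) using 1
  ext y
  simp only [mem_preimage, mem_ofPred_eq, hu]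
  constructor
  · exact fun hy => ⟨u y, mem_own_leftCoset _ _, hy⟩
  · rintro ⟨v, hv, hvC⟩
    rwa [QuotientGroup.eq.2 (hHM ((mem_leftCoset_iff _).1 hv))]

structure IsCosetExtension {X Y G : Type*} [Group G] [TopologicalSpace Y] [TopologicalSpace G]
    (i : X → Y) (f : X → G) (Γ : Set (Y × G)) : Prop where
  isClosed : IsClosed Γ
  exists_fiber_eq : ∃ H : Subgroup G, ∀ y, ∃ u : G, Prod.mk y ⁻¹' Γ = u • (H : Set G)
  mem : ∀ x, (i x, f x) ∈ Γ

lemma isCosetExtension_univ {X Y G : Type*} [Group G] [TopologicalSpace Y] [TopologicalSpace G]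
    {i : X → Y} {f : X → G} : IsCosetExtension i f univ where
  isClosed := isClosed_univ
  exists_fiber_eq := ⟨⊤, fun _ => ⟨1, by simp⟩⟩
  mem _ := trivial

namespace IsCosetExtension

variable {X Y G : Type*} [Group G] [TopologicalSpace Y] [TopologicalSpace G]
  {i : X → Y} {f : X → G}

lemma sInter [CompactSpace G] {c : Set (Set (Y × G))} (hc : c ⊆ {Γ | IsCosetExtension i f Γ})
    (hchain : IsChain (· ⊆ ·) c) (hne : c.Nonempty) : IsCosetExtension i f (⋂₀ c) where
  isClosed := isClosed_sInter fun Γ hΓ => (hc hΓ).isClosed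
  exists_fiber_eq := by
    have := hne.to_subtype
    choose H u hu using fun Γ : c => (hc Γ.2).exists_fiber_eq
    refine ⟨⨅ Γ, H Γ, fun y => ?_⟩
    rw [sInter_eq_iInter, preimage_iInter]
    simp_rw [hu _ y]
    refine exists_iInter_smul_eq_smul_iInf (fun Γ => ?_) ?_
    · rw [← hu Γ y]
      exact (hc Γ.2).isClosed.preimage (Continuous.prodMk_right y)
    · intro Γ₁ Γ₂
      rcases hchain.total Γ₁.2 Γ₂.2 with h | h
      · exact ⟨Γ₁, le_rfl, by simpa [← hu] using preimage_mono h⟩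
      · exact ⟨Γ₂, by simpa [← hu] using preimage_mono h, le_rfl⟩
  mem x := mem_sInter.2 fun Γ hΓ => (hc hΓ).mem x

lemma exists_minimal [CompactSpace G] : ∃ Γ, Minimal (IsCosetExtension i f) Γ := by
  obtain ⟨Γ, -, hΓ⟩ := zorn_superset_nonempty {Γ | IsCosetExtension i f Γ}
    (fun c hc hchain hne => ⟨⋂₀ c, sInter hc hchain hne, fun _ => sInter_subset_of_mem⟩) _
    isCosetExtension_univ
  exact ⟨Γ, hΓ⟩

variable [TopologicalSpace X]

lemma exists_subset_forall_inv_mul_mem [IsTopologicalGroup G] [CompactSpace G] [CompactSpace X]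
    [CompactSpace Y] [T2Space Y] [TotallyDisconnectedSpace Y] (hi : Continuous i)
    (hi' : Function.Injective i) (hf : Continuous f) {Γ : Set (Y × G)}
    (hΓ : IsCosetExtension i f Γ) (N : Subgroup G) [N.Normal] (hN : IsOpen (N : Set G)) :
    ∃ Γ' ⊆ Γ, IsCosetExtension i f Γ' ∧
      ∀ y v₁ v₂, (y, v₁) ∈ Γ' → (y, v₂) ∈ Γ' → v₁⁻¹ * v₂ ∈ N := by
  obtain ⟨H, hfib⟩ := hΓ.exists_fiber_eq
  choose u hu using hfib
  have : DiscreteTopology (G ⧸ N) := QuotientGroup.discreteTopology hN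
  have : DiscreteTopology (G ⧸ H ⊔ N) :=
    QuotientGroup.discreteTopology (N.isOpen_mono (le_sup_right : N ≤ H ⊔ N) hN)
  have := Subgroup.quotient_finite_of_isOpen N hN
  have hui (x : X) : (u (i x) : G ⧸ H ⊔ N) = f x := QuotientGroup.eq.2
    ((le_sup_left : H ≤ H ⊔ N) ((mem_leftCoset_iff _).1 (hu (i x) ▸ hΓ.mem x)))
  -- `k y` has to lie over the image of the fibre at `y` in `G ⧸ H ⊔ N` for the two to meet.
  obtain ⟨k, hk, hkM, hki⟩ := Profinite.exists_lift_of_finite_of_injective_of_surjective i hi hi'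
    (Subgroup.quotientMapOfLE (le_sup_right : N ≤ H ⊔ N))
    (fun q => by
      obtain ⟨g, rfl⟩ := QuotientGroup.mk_surjective q
      exact ⟨g, rfl⟩)
    (fun x => (f x : G ⧸ N)) (QuotientGroup.continuous_mk.comp hf) (fun y => (u y : G ⧸ H ⊔ N))
    (continuous_mk_of_preimage_eq_smul hΓ.isClosed le_sup_left hu) (funext hui)
  refine ⟨Γ ∩ {p | (p.2 : G ⧸ N) = k p.1}, inter_subset_left,
    ⟨hΓ.isClosed.inter (isClosed_eq (QuotientGroup.continuous_mk.comp continuous_snd)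
      (hk.comp continuous_fst)), ⟨H ⊓ N, fun y => ?_⟩,
      fun x => ⟨hΓ.mem x, (congrFun hki x).symm⟩⟩, ?_⟩
  · obtain ⟨b, hb⟩ := QuotientGroup.mk_surjective (k y)
    have hub : (u y)⁻¹ * b ∈ H ⊔ N := by
      have := congrFun hkM y
      simp only [Function.comp_apply, ← hb, Subgroup.quotientMapOfLE_apply_mk] at this
      exact QuotientGroup.eq.1 this.symm
    have hkb : Prod.mk y ⁻¹' {p : Y × G | (p.2 : G ⧸ N) = k p.1} = b • (N : Set G) := by
      rw [← QuotientGroup.eq_class_eq_leftCoset, hb]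
      rfl
    obtain ⟨w, hwu, hwb⟩ := exists_mem_smul_inter_smul_of_inv_mul_mem_sup hub
    exact ⟨w, by rw [preimage_inter, hu y, hkb, smul_inter_smul_eq_smul_inf hwu hwb]⟩
  · rintro y v₁ v₂ ⟨-, h₁⟩ ⟨-, h₂⟩
    exact QuotientGroup.eq.1 (h₁.trans h₂.symm)

lemma existsUnique_mem_of_minimal [IsTopologicalGroup G] [CompactSpace G]
    [TotallyDisconnectedSpace G] [CompactSpace X] [CompactSpace Y] [T2Space Y]
    [TotallyDisconnectedSpace Y] (hi : Continuous i) (hi' : Function.Injective i)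
    (hf : Continuous f) {Γ : Set (Y × G)} (hΓ : Minimal (IsCosetExtension i f) Γ) (y : Y) :
    ∃! v, (y, v) ∈ Γ := by
  obtain ⟨H, hH⟩ := hΓ.prop.exists_fiber_eq
  obtain ⟨u, hu⟩ := hH y
  have hu_mem : (y, u) ∈ Γ := (Set.ext_iff.1 hu u).2 (mem_own_leftCoset _ _)
  refine ⟨u, hu_mem, fun v hv => ?_⟩
  by_contra hne
  obtain ⟨N, hN⟩ := ProfiniteGrp.exist_openNormalSubgroup_sub_open_nhds_of_one
    (isOpen_compl_singleton (x := v⁻¹ * u)) (by simpa [eq_comm, inv_mul_eq_one] using hne)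
  obtain ⟨Γ', hΓ'Γ, hΓ', hfibN⟩ :=
    hΓ.prop.exists_subset_forall_inv_mul_mem hi hi' hf N.toSubgroup N.isOpen
  rw [hΓ.eq_of_subset hΓ' hΓ'Γ] at hfibN
  exact hN (hfibN y v u hv hu_mem) rfl

end IsCosetExtension

theorem profiniteGroup_injective_in_Profinite
    (G : Type u) [Group G] [TopologicalSpace G] [IsTopologicalGroup G]
    [CompactSpace G] [TotallyDisconnectedSpace G]
    (X Y : Profinite.{u}) (i : C(X, Y)) (hi : Function.Injective i)
    (f : C(X, G)) :
    ∃ g : C(Y, G), g.comp i = f := by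
  obtain ⟨Γ, hΓ⟩ := IsCosetExtension.exists_minimal (i := i) (f := f)
  choose σ hσ hσ_unique using
    IsCosetExtension.existsUnique_mem_of_minimal i.continuous hi f.continuous hΓ
  have hgraph : Γ = {p | p.2 = σ p.1} := by
    ext ⟨y, v⟩
    exact ⟨hσ_unique y v, fun h : v = σ y => h ▸ hσ y⟩
  refine ⟨⟨σ, continuous_of_isClosed_graph_of_compactSpace (hgraph ▸ hΓ.prop.isClosed)⟩, ?_⟩
  ext x
  exact (hσ_unique _ _ (hΓ.prop.mem x)).symm
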